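/- Let G be a finite simple graph on n vertices such that every vertex has degree at least n − m, and let 0 < p < 1. Then the fractional vertex CB-partition number of G satisfies vp*_CB(G) ≤ (1/2)·(p^(−1) + (1−p)^(−m)). Moreover, this bound is witnessed by a fractional CB-partition in which the total weight of all complete bipartite subgraphs taking part (i.e., the sum of all weights) equals 1/(2p(1−p)^m). -/
import Mathlib


/-- A complete bipartite subgraph of a simple graph `G`, determined by two disjoint
finsets `A`, `B` of vertices such that every pair `{a, b}` with `a ∈ A`, `b ∈ B`
is an edge of `G`.  (Degenerate subgraphs, with `A` or `B` empty and hence with no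
edges, are allowed here: they arise with positive probability in the random
construction of the paper and take part in the fractional partition, so they are
needed for the claim about the total weight.) -/
structure CBSub {V : Type*} [DecidableEq V] (G : SimpleGraph V) where
  A : Finset V
  B : Finset V
  disjointAB : Disjoint A B
  adj : ∀ a ∈ A, ∀ b ∈ B, G.Adj a b

namespace CBSub

variable {V : Type*} [DecidableEq V] {G : SimpleGraph V}

/-- The vertex set of a complete bipartite subgraph. -/
def verts (H : CBSub G) : Finset V := H.A ∪ H.B

/-- The edge set of a complete bipartite subgraph: all pairs `{a, b}` with
`a ∈ A`, `b ∈ B`. -/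
def edges (H : CBSub G) : Finset (Sym2 V) := (H.A ×ˢ H.B).image fun ab => s(ab.1, ab.2)

end CBSub

section Aux
open Finset

variable {n : ℕ} (m : ℕ) (G : SimpleGraph (Fin n)) [DecidableRel G.Adj] (p : ℝ)

private def dfQ (v : Fin n) : ℝ := (1 - p) ^ (G.degree v + m - n)

private def dfG (v : Fin n) (x : Bool × Bool) : ℝ :=
  (if x.1 then p else 1 - p) * (if x.2 then dfQ m G p v else 1 - dfQ m G p v)

private def dfMu (ω : Fin n → Bool × Bool) : ℝ := ∏ v, dfG m G p v (ω v)

private def dfA (ω : Fin n → Bool × Bool) : Finset (Fin n) :=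
  univ.filter fun v => (ω v).1

private def dfB (ω : Fin n → Bool × Bool) : Finset (Fin n) :=
  univ.filter fun v => (ω v).1 = false ∧ (ω v).2 = true ∧ ∀ u, (ω u).1 → G.Adj u v

private def dfCB (ω : Fin n → Bool × Bool) : CBSub G where
  A := dfA ω
  B := dfB G ω
  disjointAB := by
    rw [Finset.disjoint_left]
    intro a ha hb
    simp only [dfA, dfB, mem_filter, mem_univ, true_and] at ha hb
    rw [hb.1] at ha; exact Bool.noConfusion ha
  adj := by
    intro a ha b hb
    simp only [dfA, dfB, mem_filter, mem_univ, true_and] at ha hb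
    exact hb.2.2 a ha

private lemma df_key (T : Fin n → Finset (Bool × Bool)) :
    ∑ ω ∈ univ.filter (fun ω : Fin n → Bool × Bool => ∀ v, ω v ∈ T v), dfMu m G p ω
      = ∏ v, ∑ x ∈ T v, dfG m G p v x := by
  rw [Finset.prod_univ_sum]
  apply Finset.sum_congr
  · ext ω; simp [Fintype.mem_piFinset]
  · intros; rfl

private lemma dfG_sum_univ (v : Fin n) :
    ∑ x : Bool × Bool, dfG m G p v x = 1 := by
  rw [Fintype.sum_prod_type]
  simp only [dfG, Fintype.sum_bool]
  simp only [if_true, if_false, Bool.false_eq_true, ite_true, ite_false]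
  ring

private lemma dfG_sum_fst (v : Fin n) :
    ∑ x ∈ univ.filter (fun x : Bool × Bool => x.1 = true), dfG m G p v x = p := by
  have h : univ.filter (fun x : Bool × Bool => x.1 = true)
      = ({(true, false), (true, true)} : Finset (Bool × Bool)) := by decide
  rw [h, Finset.sum_insert (by decide), Finset.sum_singleton]
  simp only [dfG]
  norm_num
  ring

private lemma dfG_sum_not_fst (v : Fin n) :
    ∑ x ∈ univ.filter (fun x : Bool × Bool => x.1 = false), dfG m G p v x = 1 - p := by
  have h : univ.filter (fun x : Bool × Bool => x.1 = false)
      = ({(false, false), (false, true)} : Finset (Bool × Bool)) := by decide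
  rw [h, Finset.sum_insert (by decide), Finset.sum_singleton]
  simp only [dfG]
  norm_num
  ring

private lemma dfG_sum_singleton (v : Fin n) :
    ∑ x ∈ ({(false, true)} : Finset (Bool × Bool)), dfG m G p v x
      = (1 - p) * dfQ m G p v := by
  rw [Finset.sum_singleton]
  simp [dfG]

private lemma df_prod_D (b : Fin n) (hb : n ≤ G.degree b + m)
    (s : Finset (Fin n)) (hs : ∀ u, ¬G.Adj u b → u ∈ s)
    (S : Fin n → ℝ)
    (hSb : S b = (1 - p) * dfQ m G p b)
    (hSnp : ∀ u ∈ s, u ≠ b → ¬G.Adj u b → S u = 1 - p)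
    (hS1 : ∀ u ∈ s, G.Adj u b → S u = 1) :
    ∏ u ∈ s, S u = (1 - p) ^ m := by
  classical
  set D : Finset (Fin n) := univ.filter (fun u => ¬G.Adj u b) with hD
  have hDs : D ⊆ s := fun u hu => hs u (by simpa [hD] using hu)
  have hbD : b ∈ D := by simp [hD]
  have hcardD : D.card = n - G.degree b := by
    have : D = (G.neighborFinset b)ᶜ := by
      ext u
      simp [hD, SimpleGraph.mem_neighborFinset, SimpleGraph.adj_comm]
    rw [this, Finset.card_compl, SimpleGraph.card_neighborFinset_eq_degree,
      Fintype.card_fin]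
  have h1 : ∏ u ∈ s, S u = ∏ u ∈ D, S u := by
    refine (Finset.prod_subset hDs fun u hu hnu => ?_).symm
    exact hS1 u hu (by simpa [hD] using hnu)
  have h2 : ∏ u ∈ D, S u = S b * ∏ u ∈ D.erase b, S u :=
    (Finset.mul_prod_erase D S hbD).symm
  have h3 : ∏ u ∈ D.erase b, S u = (1 - p) ^ (D.erase b).card := by
    rw [Finset.prod_congr rfl fun u hu => ?_, Finset.prod_const]
    have hu' := Finset.mem_of_mem_erase hu
    exact hSnp u (hDs hu') (Finset.ne_of_mem_erase hu) (by simpa [hD] using hu')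
  have hdlt : G.degree b < n := by
    have := G.degree_lt_card_verts b
    simpa [Fintype.card_fin] using this
  have hcard : (D.erase b).card = n - G.degree b - 1 := by
    rw [Finset.card_erase_of_mem hbD, hcardD]
  rw [h1, h2, h3, hcard, hSb, dfQ]
  rw [mul_assoc, ← pow_add, ← pow_succ']
  congr 1
  omega

private lemma df_sum_A (v : Fin n) :
    ∑ ω ∈ univ.filter (fun ω : Fin n → Bool × Bool => v ∈ dfA ω), dfMu m G p ω = p := by
  classical
  set T : Fin n → Finset (Bool × Bool) := fun u =>
    if u = v then univ.filter (fun x : Bool × Bool => x.1 = true) else univ with hT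
  have hfil : univ.filter (fun ω : Fin n → Bool × Bool => v ∈ dfA ω)
      = univ.filter (fun ω : Fin n → Bool × Bool => ∀ u, ω u ∈ T u) := by
    apply Finset.filter_congr
    intro ω _
    simp only [dfA, mem_filter, mem_univ, true_and, hT]
    constructor
    · intro h u
      by_cases hu : u = v
      · subst hu; simp [h]
      · simp [hu]
    · intro h
      have := h v
      simpa using this
  rw [hfil, df_key]
  rw [Finset.prod_eq_single_of_mem v (mem_univ v) ?h1]
  · simp only [hT]
    rw [if_pos trivial]
    exact dfG_sum_fst m G p v
  case h1 =>
    intro u _ hu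
    simp only [hT, if_neg hu]
    exact dfG_sum_univ m G p u

private lemma df_sum_B (b : Fin n) (hb : n ≤ G.degree b + m) :
    ∑ ω ∈ univ.filter (fun ω : Fin n → Bool × Bool => b ∈ dfB G ω), dfMu m G p ω
      = (1 - p) ^ m := by
  classical
  set T : Fin n → Finset (Bool × Bool) := fun u =>
    if u = b then ({(false, true)} : Finset (Bool × Bool))
    else if G.Adj u b then univ
    else univ.filter (fun x : Bool × Bool => x.1 = false) with hT
  have hfil : univ.filter (fun ω : Fin n → Bool × Bool => b ∈ dfB G ω)
      = univ.filter (fun ω : Fin n → Bool × Bool => ∀ u, ω u ∈ T u) := by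
    apply Finset.filter_congr
    intro ω _
    simp only [dfB, mem_filter, mem_univ, true_and, hT]
    constructor
    · rintro ⟨h1, h2, h3⟩ u
      by_cases hu : u = b
      · subst hu
        rw [if_pos rfl, Finset.mem_singleton]
        exact Prod.ext_iff.2 ⟨h1, h2⟩
      · by_cases ha : G.Adj u b
        · simp [hu, ha]
        · simp only [if_neg hu, if_neg ha, mem_filter, mem_univ, true_and]
          by_contra hc
          exact ha (h3 u (by simpa using hc))
    · intro h
      have hbb := h b
      rw [if_pos rfl, Finset.mem_singleton] at hbb
      refine ⟨by rw [hbb], by rw [hbb], fun u hu => ?_⟩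
      by_contra ha
      have hub : u ≠ b := by
        intro he; subst he; rw [hbb] at hu; exact Bool.noConfusion hu
      have := h u
      simp only [if_neg hub, if_neg ha, mem_filter, mem_univ, true_and] at this
      rw [this] at hu; exact Bool.noConfusion hu
  rw [hfil, df_key]
  refine df_prod_D m G p b hb univ (fun u _ => mem_univ u) _ ?_ ?_ ?_
  · simp only [hT]
    rw [if_pos trivial]
    exact dfG_sum_singleton m G p b
  · intro u _ hub ha
    simp only [hT, if_neg hub, if_neg ha]
    exact dfG_sum_not_fst m G p u
  · intro u _ ha
    have hub : u ≠ b := fun he => G.irrefl (he ▸ ha)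
    simp only [hT, if_neg hub, if_pos ha]
    exact dfG_sum_univ m G p u

private lemma df_sum_edge (a b : Fin n) (hab : G.Adj a b) (hb : n ≤ G.degree b + m) :
    ∑ ω ∈ univ.filter (fun ω : Fin n → Bool × Bool => a ∈ dfA ω ∧ b ∈ dfB G ω),
      dfMu m G p ω = p * (1 - p) ^ m := by
  classical
  have hne : a ≠ b := G.ne_of_adj hab
  set T : Fin n → Finset (Bool × Bool) := fun u =>
    if u = a then univ.filter (fun x : Bool × Bool => x.1 = true)
    else if u = b then ({(false, true)} : Finset (Bool × Bool))
    else if G.Adj u b then univ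
    else univ.filter (fun x : Bool × Bool => x.1 = false) with hT
  have hfil : univ.filter (fun ω : Fin n → Bool × Bool => a ∈ dfA ω ∧ b ∈ dfB G ω)
      = univ.filter (fun ω : Fin n → Bool × Bool => ∀ u, ω u ∈ T u) := by
    apply Finset.filter_congr
    intro ω _
    simp only [dfA, dfB, mem_filter, mem_univ, true_and, hT]
    constructor
    · rintro ⟨ha, h1, h2, h3⟩ u
      by_cases hua : u = a
      · subst hua; simp [ha]
      · by_cases hub : u = b
        · subst hub
          rw [if_neg hua, if_pos rfl, Finset.mem_singleton]
          exact Prod.ext_iff.2 ⟨h1, h2⟩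
        · by_cases hadj : G.Adj u b
          · simp [hua, hub, hadj]
          · simp only [if_neg hua, if_neg hub, if_neg hadj, mem_filter, mem_univ, true_and]
            by_contra hc
            exact hadj (h3 u (by simpa using hc))
    · intro h
      have hha := h a
      rw [if_pos rfl] at hha
      rw [mem_filter] at hha
      have hha := hha.2
      have hhb := h b
      rw [if_neg (Ne.symm hne), if_pos rfl, Finset.mem_singleton] at hhb
      refine ⟨hha, by rw [hhb], by rw [hhb], fun u hu => ?_⟩
      by_contra hadj
      have hub : u ≠ b := by
        intro he; subst he; rw [hhb] at hu; exact Bool.noConfusion hu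
      have hua : u ≠ a := by
        intro he; subst he; exact hadj hab
      have := h u
      simp only [if_neg hua, if_neg hub, if_neg hadj, mem_filter, mem_univ, true_and] at this
      rw [this] at hu; exact Bool.noConfusion hu
  rw [hfil, df_key]
  rw [← Finset.mul_prod_erase univ _ (mem_univ a)]
  have hSa : ∑ x ∈ T a, dfG m G p a x = p := by
    simp only [hT]
    rw [if_pos trivial]
    exact dfG_sum_fst m G p a
  rw [hSa]
  congr 1
  refine df_prod_D m G p b hb (univ.erase a) (fun u hu => ?_) _ ?_ ?_ ?_
  · refine Finset.mem_erase.2 ⟨fun he => hu (he ▸ hab), mem_univ u⟩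
  · simp only [hT]
    rw [if_neg (Ne.symm hne), if_pos trivial]
    exact dfG_sum_singleton m G p b
  · intro u hu hub ha
    have hua : u ≠ a := Finset.ne_of_mem_erase hu
    simp only [hT, if_neg hua, if_neg hub, if_neg ha]
    exact dfG_sum_not_fst m G p u
  · intro u hu ha
    have hua : u ≠ a := Finset.ne_of_mem_erase hu
    have hub : u ≠ b := fun he => G.irrefl (he ▸ ha)
    simp only [hT, if_neg hua, if_neg hub, if_pos ha]
    exact dfG_sum_univ m G p u

private lemma df_sum_total :
    ∑ ω : Fin n → Bool × Bool, dfMu m G p ω = 1 := by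
  classical
  have h : (univ : Finset (Fin n → Bool × Bool))
      = univ.filter (fun ω : Fin n → Bool × Bool =>
          ∀ v, ω v ∈ (univ : Finset (Bool × Bool))) := by
    simp
  rw [h, df_key]
  rw [Finset.prod_congr rfl fun v _ => dfG_sum_univ m G p v]
  simp

private lemma dfMu_nonneg (hp0 : 0 < p) (hp1 : p < 1) (ω : Fin n → Bool × Bool) :
    0 ≤ dfMu m G p ω := by
  refine Finset.prod_nonneg fun v _ => mul_nonneg ?_ ?_
  · split <;> linarith
  · have hq0 : 0 ≤ dfQ m G p v := pow_nonneg (by linarith) _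
    have hq1 : dfQ m G p v ≤ 1 := pow_le_one₀ (by linarith) (by linarith)
    split <;> linarith

private lemma df_convert {N : ℕ} (eqv : Fin N ≃ (Fin n → Bool × Bool))
    (C : ℝ) (Q : (Fin n → Bool × Bool) → Prop) [DecidablePred Q] :
    ∑ i ∈ univ.filter (fun i => Q (eqv i)), C * dfMu m G p (eqv i)
      = C * ∑ ω ∈ univ.filter Q, dfMu m G p ω := by
  rw [Finset.mul_sum, Finset.sum_filter, Finset.sum_filter]
  exact Fintype.sum_equiv eqv _ _ (fun i => rfl)

end Aux


/-- **Fractional partitions of very dense graphs.**  Let `G` be a graph on `n`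
vertices in which every vertex has degree at least `n - m` (stated as
`n ≤ deg v + m`) and let `0 < p < 1`.  Then there is a fractional CB-partition of
`G` (nonnegative weights on complete bipartite subgraphs such that every edge
gets total weight exactly `1`) in which the load of every vertex is at most
`(1/2) · (p⁻¹ + (1-p)^(-m))`, and moreover the total weight of all the complete
bipartite subgraphs taking part equals `1 / (2p(1-p)^m)`.  In particular
`vp*_CB(G) ≤ (1/2) · (p⁻¹ + (1-p)^(-m))`. -/
theorem dense_graph_fractional_partition (n m : ℕ) (G : SimpleGraph (Fin n))
    [DecidableRel G.Adj] (hdeg : ∀ v : Fin n, n ≤ G.degree v + m)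
    (p : ℝ) (hp0 : 0 < p) (hp1 : p < 1) :
    ∃ (M : ℕ) (f : Fin M → CBSub G) (w : Fin M → ℝ),
      (∀ i, 0 ≤ w i) ∧
      (∀ e ∈ G.edgeSet,
        ∑ i ∈ Finset.univ.filter (fun i : Fin M => e ∈ (f i).edges), w i = 1) ∧
      (∀ v : Fin n,
        ∑ i ∈ Finset.univ.filter (fun i : Fin M => v ∈ (f i).verts), w i ≤
          (1 / 2) * (p⁻¹ + ((1 - p) ^ m)⁻¹)) ∧
      (∑ i, w i = 1 / (2 * p * (1 - p) ^ m)) := by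
  classical
  open Finset in
  set C : ℝ := 1 / (2 * p * (1 - p) ^ m) with hC
  have hp1' : (0:ℝ) < 1 - p := by linarith
  have hpm : (0:ℝ) < (1 - p) ^ m := pow_pos hp1' m
  have hC0 : 0 < C := by
    rw [hC]
    positivity
  set N := Fintype.card (Fin n → Bool × Bool) with hN
  set eqv : Fin N ≃ (Fin n → Bool × Bool) := (Fintype.equivFin _).symm with heqv
  refine ⟨N, fun i => dfCB G (eqv i), fun i => C * dfMu m G p (eqv i), ?_, ?_, ?_, ?_⟩
  · intro i
    exact mul_nonneg hC0.le (dfMu_nonneg m G p hp0 hp1 (eqv i))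
  · -- edge condition
    intro e he
    induction e using Sym2.ind with
    | _ a b =>
      rw [SimpleGraph.mem_edgeSet] at he
      have hmem : ∀ H : CBSub G,
          s(a,b) ∈ H.edges ↔ (a ∈ H.A ∧ b ∈ H.B ∨ b ∈ H.A ∧ a ∈ H.B) := by
        intro H
        constructor
        · intro h
          simp only [CBSub.edges, Finset.mem_image, Finset.mem_product, Prod.exists] at h
          obtain ⟨x, y, ⟨hx, hy⟩, hxy⟩ := h
          rw [Sym2.eq_iff] at hxy
          rcases hxy with ⟨rfl, rfl⟩ | ⟨rfl, rfl⟩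
          · exact Or.inl ⟨hx, hy⟩
          · exact Or.inr ⟨hx, hy⟩
        · intro h
          simp only [CBSub.edges, Finset.mem_image, Finset.mem_product, Prod.exists]
          rcases h with ⟨ha, hb⟩ | ⟨hb, ha⟩
          · exact ⟨a, b, ⟨ha, hb⟩, rfl⟩
          · exact ⟨b, a, ⟨hb, ha⟩, by rw [Sym2.eq_swap]⟩
      rw [df_convert m G p eqv C (fun ω => s(a,b) ∈ (dfCB G ω).edges)]
      have hsplit : (univ.filter fun ω : Fin n → Bool × Bool =>
            s(a,b) ∈ (dfCB G ω).edges)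
          = (univ.filter fun ω : Fin n → Bool × Bool => a ∈ dfA ω ∧ b ∈ dfB G ω)
            ∪ (univ.filter fun ω : Fin n → Bool × Bool => b ∈ dfA ω ∧ a ∈ dfB G ω) := by
        rw [← Finset.filter_or]
        exact Finset.filter_congr fun ω _ => hmem (dfCB G ω)
      rw [hsplit, Finset.sum_union ?hdisj]
      case hdisj =>
        rw [Finset.disjoint_left]
        intro ω h1 h2
        simp only [Finset.mem_filter, dfA, dfB, Finset.mem_univ, true_and] at h1 h2
        rw [h2.2.1] at h1
        exact Bool.noConfusion h1.1
      rw [df_sum_edge m G p a b he (hdeg b), df_sum_edge m G p b a he.symm (hdeg a)]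
      rw [hC]
      field_simp
      ring
  · -- vertex load
    intro v
    rw [df_convert m G p eqv C (fun ω => v ∈ (dfCB G ω).verts)]
    have hsplit : (univ.filter fun ω : Fin n → Bool × Bool => v ∈ (dfCB G ω).verts)
        = (univ.filter fun ω : Fin n → Bool × Bool => v ∈ dfA ω)
          ∪ (univ.filter fun ω : Fin n → Bool × Bool => v ∈ dfB G ω) := by
      rw [← Finset.filter_or]
      refine Finset.filter_congr fun ω _ => ?_
      simp only [CBSub.verts, Finset.mem_union]
      exact Iff.rfl
    rw [hsplit, Finset.sum_union ?hdisj2]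
    case hdisj2 =>
      rw [Finset.disjoint_left]
      intro ω h1 h2
      simp only [Finset.mem_filter, dfA, dfB, Finset.mem_univ, true_and] at h1 h2
      rw [h2.1] at h1
      exact Bool.noConfusion h1
    rw [df_sum_A m G p v, df_sum_B m G p v (hdeg v)]
    have : C * (p + (1 - p) ^ m) = 1 / 2 * (p⁻¹ + ((1 - p) ^ m)⁻¹) := by
      rw [hC]
      field_simp
      ring
    rw [this]
  · -- total weight
    rw [← Finset.mul_sum]
    rw [Equiv.sum_comp eqv (dfMu m G p), df_sum_total m G p]
    rw [mul_one]
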